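/- arXiv:1506.05453 — 3 statements merged into one kernel-verified Lean document; each statement's English description precedes it below -/
import Mathlib

section
/- Let M be an Orlicz function and 1 ≤ p < ∞. Then C_p(M) = { real sequences x = (x_k)_{k≥1} : there exists ρ > 0 with Σ_{i=1}^∞ ((1/i) Σ_{k=1}^{i} M(|x_k|/ρ))^p < ∞ } is a complete metric space with respect to the metric η₁(x,y) = inf{ ρ > 0 : (Σ_{i=1}^∞ ((1/i) Σ_{k=1}^{i} M(|x_k − y_k|/ρ))^p)^{1/p} ≤ 1 }. -/
/-!
Statement 3 (Paper: Lemma 2.2(i)).  `C_p(M)` is a complete metric space with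
respect to the metric `η₁`.  Sequences are indexed so that `x k` represents
the paper's `x_{k+1}` (i.e. indices start at 1 in the paper).
-/

open scoped ENNReal

/-- An Orlicz function: continuous, non-decreasing and convex on `[0,∞)`,
with `M 0 = 0`, `M x > 0` for `x > 0` and `M x → ∞` as `x → ∞`. -/
def IsOrliczFunction (M : ℝ → ℝ) : Prop :=
  ContinuousOn M (Set.Ici 0) ∧ MonotoneOn M (Set.Ici 0) ∧ ConvexOn ℝ (Set.Ici 0) M ∧
    M 0 = 0 ∧ (∀ x : ℝ, 0 < x → 0 < M x) ∧ Filter.Tendsto M Filter.atTop Filter.atTop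

/-- The Cesàro average `(1/i) ∑_{k=1}^{i} M (|x_k| / ρ)`, where `i` here is `i+1`. -/
noncomputable def cesTerm (M : ℝ → ℝ) (x : ℕ → ℝ) (ρ : ℝ) (i : ℕ) : ℝ :=
  (1 / (i + 1 : ℝ)) * ∑ k ∈ Finset.range (i + 1), M (|x k| / ρ)

/-- `∑_{i=1}^∞ ((1/i) ∑_{k=1}^{i} M(|x_k|/ρ))^p`, valued in `ℝ≥0∞`. -/
noncomputable def cesaroSum (M : ℝ → ℝ) (p : ℝ) (x : ℕ → ℝ) (ρ : ℝ) : ℝ≥0∞ :=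
  ∑' i : ℕ, ENNReal.ofReal (cesTerm M x ρ i) ^ p

/-- The space `C_p(M)`. -/
def CpM (M : ℝ → ℝ) (p : ℝ) : Set (ℕ → ℝ) :=
  {x | ∃ ρ > 0, cesaroSum M p x ρ < ⊤}

/-- The metric `η₁`. -/
noncomputable def eta1 (M : ℝ → ℝ) (p : ℝ) (x y : ℕ → ℝ) : ℝ :=
  sInf {ρ : ℝ | 0 < ρ ∧ (cesaroSum M p (fun k => x k - y k) ρ) ^ (1 / p) ≤ 1}

/-!
`η₁(x, y)` is the Luxemburg gauge of `x - y` for the modular `(d, ρ) ↦ cesaroSum M p d ρ`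
(the outer `1/p`-th power does not affect the condition `≤ 1`). Convexity of `M` and of
`t ↦ t ^ p` makes this modular jointly convex, which gives the triangle inequality and shows that
`C_p(M)` is closed under addition. The `k`-th Cesàro average dominates `M(|d k| / ρ) / (k + 1)`
and `M → ∞`, so each coordinate is Lipschitz for `η₁`: the gauge separates points and a Cauchy
sequence converges coordinatewise. By lower semicontinuity of the modular (Fatou) the
coordinatewise limit belongs to `C_p(M)` and is the `η₁`-limit.
-/

open Filter Topology Set
open scoped NNReal

namespace IsOrliczFunction

variable {M : ℝ → ℝ}

theorem map_zero (hM : IsOrliczFunction M) : M 0 = 0 :=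
  hM.2.2.2.1

theorem nonneg (hM : IsOrliczFunction M) {t : ℝ} (ht : 0 ≤ t) : 0 ≤ M t :=
  hM.map_zero ▸ hM.2.1 self_mem_Ici ht ht

theorem mono (hM : IsOrliczFunction M) {a b : ℝ} (ha : 0 ≤ a) (hab : a ≤ b) : M a ≤ M b :=
  hM.2.1 ha (ha.trans hab) hab

theorem map_abs_add_div_le (hM : IsOrliczFunction M) (a b : ℝ) {ρ σ : ℝ} (hρ : 0 < ρ)
    (hσ : 0 < σ) :
    M (|a + b| / (ρ + σ)) ≤ ρ / (ρ + σ) * M (|a| / ρ) + σ / (ρ + σ) * M (|b| / σ) := by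
  have hρσ : 0 < ρ + σ := add_pos hρ hσ
  have hsplit : ρ / (ρ + σ) * (|a| / ρ) + σ / (ρ + σ) * (|b| / σ) = (|a| + |b|) / (ρ + σ) := by
    field_simp
  calc M (|a + b| / (ρ + σ)) ≤ M ((|a| + |b|) / (ρ + σ)) :=
        hM.mono (by positivity) (by gcongr; exact abs_add_le a b)
    _ ≤ ρ / (ρ + σ) * M (|a| / ρ) + σ / (ρ + σ) * M (|b| / σ) := by
        rw [← hsplit]
        exact hM.2.2.1.2 (mem_Ici.2 (by positivity)) (mem_Ici.2 (by positivity))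
          (by positivity) (by positivity) (by field_simp)

theorem exists_le_of_map_le (hM : IsOrliczFunction M) (C : ℝ) :
    ∃ X > 0, ∀ t, M t ≤ C → t ≤ X := by
  obtain ⟨X, hX⟩ := (tendsto_atTop.mp hM.2.2.2.2.2 (C + 1)).exists_forall_of_atTop
  refine ⟨max X 1, by positivity, fun t hMt => ?_⟩
  by_contra! hlt
  linarith [hX t ((le_max_left X 1).trans hlt.le)]

end IsOrliczFunction

section

variable {M : ℝ → ℝ} {p ρ σ : ℝ} {d e : ℕ → ℝ}

theorem cesTerm_nonneg (hM : IsOrliczFunction M) (hρ : 0 ≤ ρ) (i : ℕ) : 0 ≤ cesTerm M d ρ i :=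
  mul_nonneg (by positivity) (Finset.sum_nonneg fun _ _ => hM.nonneg (by positivity))

theorem cesTerm_le_of_le (hM : IsOrliczFunction M) (hρ : 0 < ρ) (hρσ : ρ ≤ σ) (i : ℕ) :
    cesTerm M d σ i ≤ cesTerm M d ρ i := by
  have hσ : 0 < σ := hρ.trans_le hρσ
  unfold cesTerm
  gcongr with k
  exact hM.mono (by positivity) (div_le_div_of_nonneg_left (abs_nonneg _) hρ hρσ)

theorem cesTerm_add_le (hM : IsOrliczFunction M) (hρ : 0 < ρ) (hσ : 0 < σ) (i : ℕ) :
    cesTerm M (d + e) (ρ + σ) i ≤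
      ρ / (ρ + σ) * cesTerm M d ρ i + σ / (ρ + σ) * cesTerm M e σ i := by
  calc cesTerm M (d + e) (ρ + σ) i
      ≤ 1 / (i + 1 : ℝ) * ∑ k ∈ Finset.range (i + 1),
          (ρ / (ρ + σ) * M (|d k| / ρ) + σ / (ρ + σ) * M (|e k| / σ)) := by
        unfold cesTerm
        gcongr with k
        exact hM.map_abs_add_div_le (d k) (e k) hρ hσ
    _ = ρ / (ρ + σ) * cesTerm M d ρ i + σ / (ρ + σ) * cesTerm M e σ i := by
        rw [Finset.sum_add_distrib, ← Finset.mul_sum, ← Finset.mul_sum, cesTerm, cesTerm]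
        ring

theorem map_abs_div_le_of_cesTerm_le_one (hM : IsOrliczFunction M) (hρ : 0 ≤ ρ) {k : ℕ}
    (h : cesTerm M d ρ k ≤ 1) : M (|d k| / ρ) ≤ k + 1 := by
  rw [cesTerm, one_div, inv_mul_le_iff₀ (by positivity), mul_one] at h
  refine le_trans ?_ h
  exact Finset.single_le_sum (f := fun j => M (|d j| / ρ))
    (fun j _ => hM.nonneg (by positivity)) (Finset.self_mem_range_succ k)

theorem cesaroSum_neg (ρ : ℝ) : cesaroSum M p (-d) ρ = cesaroSum M p d ρ := by
  simp only [cesaroSum, cesTerm, Pi.neg_apply, abs_neg]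

theorem cesaroSum_zero (hM : IsOrliczFunction M) (hp : 0 < p) (ρ : ℝ) :
    cesaroSum M p 0 ρ = 0 := by
  simp [cesaroSum, cesTerm, hM.map_zero, ENNReal.zero_rpow_of_pos hp]

theorem cesaroSum_le_of_le (hM : IsOrliczFunction M) (hp : 0 ≤ p) (hρ : 0 < ρ) (hρσ : ρ ≤ σ) :
    cesaroSum M p d σ ≤ cesaroSum M p d ρ :=
  ENNReal.tsum_le_tsum fun i =>
    ENNReal.rpow_le_rpow (ENNReal.ofReal_le_ofReal (cesTerm_le_of_le hM hρ hρσ i)) hp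

theorem cesaroSum_add_le (hM : IsOrliczFunction M) (hp : 1 ≤ p) (hρ : 0 < ρ) (hσ : 0 < σ) :
    cesaroSum M p (d + e) (ρ + σ) ≤
      ENNReal.ofReal (ρ / (ρ + σ)) * cesaroSum M p d ρ +
        ENNReal.ofReal (σ / (ρ + σ)) * cesaroSum M p e σ := by
  have hp0 : 0 ≤ p := zero_le_one.trans hp
  unfold cesaroSum
  rw [← ENNReal.tsum_mul_left, ← ENNReal.tsum_mul_left, ← ENNReal.tsum_add]
  refine ENNReal.tsum_le_tsum fun i => ?_
  have hd := cesTerm_nonneg (d := d) hM hρ.le i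
  have he := cesTerm_nonneg (d := e) hM hσ.le i
  have hreal : cesTerm M (d + e) (ρ + σ) i ^ p ≤
      ρ / (ρ + σ) * cesTerm M d ρ i ^ p + σ / (ρ + σ) * cesTerm M e σ i ^ p :=
    calc cesTerm M (d + e) (ρ + σ) i ^ p
        ≤ (ρ / (ρ + σ) * cesTerm M d ρ i + σ / (ρ + σ) * cesTerm M e σ i) ^ p := by
          gcongr
          · exact cesTerm_nonneg hM (by positivity) i
          · exact cesTerm_add_le hM hρ hσ i
      _ ≤ ρ / (ρ + σ) * cesTerm M d ρ i ^ p + σ / (ρ + σ) * cesTerm M e σ i ^ p :=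
          (convexOn_rpow hp).2 hd he (by positivity) (by positivity) (by field_simp)
  rw [ENNReal.ofReal_rpow_of_nonneg (cesTerm_nonneg hM (by positivity) i) hp0,
    ENNReal.ofReal_rpow_of_nonneg hd hp0, ENNReal.ofReal_rpow_of_nonneg he hp0,
    ← ENNReal.ofReal_mul (by positivity), ← ENNReal.ofReal_mul (by positivity),
    ← ENNReal.ofReal_add (by positivity) (by positivity)]
  exact ENNReal.ofReal_le_ofReal hreal

theorem cesaroSum_add_le_one (hM : IsOrliczFunction M) (hp : 1 ≤ p) (hρ : 0 < ρ) (hσ : 0 < σ)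
    (hd : cesaroSum M p d ρ ≤ 1) (he : cesaroSum M p e σ ≤ 1) :
    cesaroSum M p (d + e) (ρ + σ) ≤ 1 :=
  calc cesaroSum M p (d + e) (ρ + σ)
      ≤ ENNReal.ofReal (ρ / (ρ + σ)) * 1 + ENNReal.ofReal (σ / (ρ + σ)) * 1 := by
        refine (cesaroSum_add_le hM hp hρ hσ).trans ?_
        gcongr
    _ = 1 := by
        rw [mul_one, mul_one, ← ENNReal.ofReal_add (by positivity) (by positivity), ← add_div,
          div_self (by positivity), ENNReal.ofReal_one]

/-- Joint convexity with `e = 0` gives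
`cesaroSum M p d (ρ + σ) ≤ ρ / (ρ + σ) * cesaroSum M p d ρ`, which is small for large `σ`. -/
theorem exists_cesaroSum_le_one (hM : IsOrliczFunction M) (hp : 1 ≤ p) (hρ : 0 < ρ)
    (hfin : cesaroSum M p d ρ < ⊤) : ∃ σ > 0, cesaroSum M p d σ ≤ 1 := by
  set c := (cesaroSum M p d ρ).toReal
  have hc : 0 ≤ c := ENNReal.toReal_nonneg
  have hσ : 0 < ρ * c + 1 := by positivity
  refine ⟨ρ + (ρ * c + 1), by positivity, ?_⟩
  have h := cesaroSum_add_le (d := d) (e := 0) hM hp hρ hσ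
  rw [add_zero, cesaroSum_zero hM (by linarith), mul_zero, add_zero,
    ← ENNReal.ofReal_toReal hfin.ne, ← ENNReal.ofReal_mul (by positivity)] at h
  refine h.trans (ENNReal.ofReal_le_one.mpr ?_)
  rw [div_mul_eq_mul_div, div_le_one (by positivity)]
  linarith

theorem map_abs_div_le_of_cesaroSum_le_one (hM : IsOrliczFunction M) (hp : 0 < p) (hρ : 0 ≤ ρ)
    (h : cesaroSum M p d ρ ≤ 1) (k : ℕ) : M (|d k| / ρ) ≤ k + 1 := by
  have hterm : ENNReal.ofReal (cesTerm M d ρ k) ^ p ≤ 1 ^ p :=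
    (ENNReal.le_tsum k).trans (h.trans_eq (ENNReal.one_rpow p).symm)
  rw [ENNReal.rpow_le_rpow_iff hp, ENNReal.ofReal_le_one] at hterm
  exact map_abs_div_le_of_cesTerm_le_one hM hρ hterm

theorem lowerSemicontinuous_cesaroSum (hM : IsOrliczFunction M) (hρ : 0 ≤ ρ) :
    LowerSemicontinuous fun d : ℕ → ℝ => cesaroSum M p d ρ := by
  refine lowerSemicontinuous_tsum fun i => Continuous.lowerSemicontinuous ?_
  refine ENNReal.continuous_rpow_const.comp (ENNReal.continuous_ofReal.comp ?_)
  refine continuous_const.mul (continuous_finsetSum _ fun k _ => ?_)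
  exact hM.1.comp_continuous (by fun_prop) fun d => mem_Ici.mpr (by positivity)

theorem add_mem_CpM (hM : IsOrliczFunction M) (hp : 1 ≤ p) (hd : d ∈ CpM M p)
    (he : e ∈ CpM M p) : d + e ∈ CpM M p := by
  obtain ⟨ρ, hρ, hdρ⟩ := hd
  obtain ⟨σ, hσ, heσ⟩ := he
  refine ⟨ρ + σ, add_pos hρ hσ, (cesaroSum_add_le hM hp hρ hσ).trans_lt ?_⟩
  exact ENNReal.add_lt_top.2 ⟨ENNReal.mul_lt_top ENNReal.ofReal_lt_top hdρ,
    ENNReal.mul_lt_top ENNReal.ofReal_lt_top heσ⟩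

theorem neg_mem_CpM (hd : d ∈ CpM M p) : -d ∈ CpM M p := by
  simpa only [CpM, mem_ofPred_eq, cesaroSum_neg] using hd

theorem sub_mem_CpM (hM : IsOrliczFunction M) (hp : 1 ≤ p) (hd : d ∈ CpM M p)
    (he : e ∈ CpM M p) : d - e ∈ CpM M p :=
  sub_eq_add_neg d e ▸ add_mem_CpM hM hp hd (neg_mem_CpM he)

noncomputable def luxemburg (M : ℝ → ℝ) (p : ℝ) (d : ℕ → ℝ) : ℝ :=
  sInf {ρ : ℝ | 0 < ρ ∧ cesaroSum M p d ρ ≤ 1}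

theorem eta1_eq_luxemburg (hp : 0 < p) (x y : ℕ → ℝ) : eta1 M p x y = luxemburg M p (x - y) := by
  simp only [eta1, luxemburg, one_div, ENNReal.rpow_inv_le_iff hp, ENNReal.one_rpow]
  rfl

theorem luxemburg_nonneg (d : ℕ → ℝ) : 0 ≤ luxemburg M p d :=
  Real.sInf_nonneg fun _ hρ => hρ.1.le

theorem luxemburg_le (hρ : 0 < ρ) (h : cesaroSum M p d ρ ≤ 1) : luxemburg M p d ≤ ρ :=
  csInf_le ⟨0, fun _ hσ => hσ.1.le⟩ ⟨hρ, h⟩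

theorem cesaroSum_le_one_of_luxemburg_lt (hM : IsOrliczFunction M) (hp : 1 ≤ p)
    (hd : d ∈ CpM M p) (h : luxemburg M p d < ρ) : cesaroSum M p d ρ ≤ 1 := by
  obtain ⟨ρ₀, hρ₀, hfin⟩ := hd
  obtain ⟨σ, hσ, hσ1⟩ := exists_cesaroSum_le_one hM hp hρ₀ hfin
  obtain ⟨τ, ⟨hτ, hτ1⟩, hτρ⟩ := exists_lt_of_csInf_lt (by exact ⟨σ, hσ, hσ1⟩) h
  exact (cesaroSum_le_of_le hM (by linarith) hτ hτρ.le).trans hτ1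

theorem luxemburg_zero (hM : IsOrliczFunction M) (hp : 0 < p) : luxemburg M p 0 = 0 := by
  refine le_antisymm (le_of_forall_pos_le_add fun ε hε => ?_) (luxemburg_nonneg 0)
  simpa using luxemburg_le hε ((cesaroSum_zero hM hp ε).trans_le zero_le_one)

theorem luxemburg_neg (d : ℕ → ℝ) : luxemburg M p (-d) = luxemburg M p d := by
  simp only [luxemburg, cesaroSum_neg]

theorem luxemburg_add_le (hM : IsOrliczFunction M) (hp : 1 ≤ p) (hd : d ∈ CpM M p)
    (he : e ∈ CpM M p) : luxemburg M p (d + e) ≤ luxemburg M p d + luxemburg M p e := by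
  refine le_of_forall_pos_le_add fun ε hε => ?_
  have hρ : luxemburg M p d < luxemburg M p d + ε / 2 := by linarith
  have hσ : luxemburg M p e < luxemburg M p e + ε / 2 := by linarith
  have hρ0 := (luxemburg_nonneg d).trans_lt hρ
  have hσ0 := (luxemburg_nonneg e).trans_lt hσ
  calc luxemburg M p (d + e) ≤ (luxemburg M p d + ε / 2) + (luxemburg M p e + ε / 2) :=
        luxemburg_le (add_pos hρ0 hσ0) (cesaroSum_add_le_one hM hp hρ0 hσ0
          (cesaroSum_le_one_of_luxemburg_lt hM hp hd hρ)
          (cesaroSum_le_one_of_luxemburg_lt hM hp he hσ))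
    _ = luxemburg M p d + luxemburg M p e + ε := by ring

theorem exists_abs_apply_le_mul_luxemburg (hM : IsOrliczFunction M) (hp : 1 ≤ p) (k : ℕ) :
    ∃ C : ℝ≥0, ∀ d ∈ CpM M p, |d k| ≤ C * luxemburg M p d := by
  obtain ⟨X, hX, hbound⟩ := hM.exists_le_of_map_le (k + 1)
  refine ⟨⟨X, hX.le⟩, fun d hd => ?_⟩
  change |d k| ≤ X * _
  rw [← div_le_iff₀' hX]
  refine le_of_forall_gt_imp_ge_of_dense fun ρ hρ => ?_
  have hρ0 : 0 < ρ := (luxemburg_nonneg d).trans_lt hρ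
  rw [div_le_iff₀ hX, ← div_le_iff₀' hρ0]
  exact hbound _ (map_abs_div_le_of_cesaroSum_le_one hM (by linarith) hρ0.le
    (cesaroSum_le_one_of_luxemburg_lt hM hp hd hρ) k)

noncomputable abbrev CpM.metricSpace (hM : IsOrliczFunction M) (hp : 1 ≤ p) :
    MetricSpace (CpM M p) where
  dist x y := luxemburg M p (x.1 - y.1)
  dist_self x := by simpa only [sub_self] using luxemburg_zero hM (by linarith)
  dist_comm x y := by simpa only [neg_sub] using luxemburg_neg (M := M) (p := p) (y.1 - x.1)
  dist_triangle x y z := by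
    simpa only [sub_add_sub_cancel] using
      luxemburg_add_le hM hp (sub_mem_CpM hM hp x.2 y.2) (sub_mem_CpM hM hp y.2 z.2)
  eq_of_dist_eq_zero {x y} h := by
    refine Subtype.ext (funext fun k => ?_)
    obtain ⟨C, hC⟩ := exists_abs_apply_le_mul_luxemburg hM hp k
    simpa only [h, mul_zero, Pi.sub_apply, abs_nonpos_iff, sub_eq_zero] using
      hC _ (sub_mem_CpM hM hp x.2 y.2)

theorem CpM.completeSpace (hM : IsOrliczFunction M) (hp : 1 ≤ p) :
    @CompleteSpace (CpM M p) (CpM.metricSpace hM hp).toUniformSpace := by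
  let := CpM.metricSpace hM hp
  refine Metric.complete_of_cauchySeq_tendsto fun u hu => ?_
  have hcoord : ∀ k, CauchySeq fun n => (u n).1 k := fun k => by
    obtain ⟨C, hC⟩ := exists_abs_apply_le_mul_luxemburg hM hp k
    have hlip : LipschitzWith C fun x : CpM M p => x.1 k :=
      LipschitzWith.of_dist_le_mul fun x y => by
        rw [Real.dist_eq]
        exact hC _ (sub_mem_CpM hM hp x.2 y.2)
    exact hlip.cauchySeq_comp hu
  choose x hx using fun k => cauchySeq_tendsto_of_complete (hcoord k)
  have hxlim : Tendsto (fun n => (u n).1) atTop (𝓝 x) := tendsto_pi_nhds.2 hx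
  have hclose : ∀ ε > 0, ∃ N, ∀ n ≥ N, cesaroSum M p ((u n).1 - x) ε ≤ 1 := by
    intro ε hε
    obtain ⟨N, hN⟩ := Metric.cauchySeq_iff.1 hu ε hε
    refine ⟨N, fun n hn => ?_⟩
    refine ((lowerSemicontinuous_cesaroSum hM hε.le).isClosed_preimage 1).mem_of_tendsto
      (tendsto_const_nhds.sub hxlim) ?_
    filter_upwards [eventually_ge_atTop N] with m hm
    exact cesaroSum_le_one_of_luxemburg_lt hM hp (sub_mem_CpM hM hp (u n).2 (u m).2)
      (hN n hn m hm)
  obtain ⟨N, hN⟩ := hclose 1 one_pos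
  have hxmem : x ∈ CpM M p := by
    simpa using sub_mem_CpM hM hp (u N).2 ⟨1, one_pos, (hN N le_rfl).trans_lt ENNReal.one_lt_top⟩
  refine ⟨⟨x, hxmem⟩, Metric.tendsto_atTop.2 fun ε hε => ?_⟩
  obtain ⟨N, hN⟩ := hclose (ε / 2) (half_pos hε)
  exact ⟨N, fun n hn => (luxemburg_le (half_pos hε) (hN n hn)).trans_lt (half_lt_self hε)⟩

end

theorem Cp_complete_metric (M : ℝ → ℝ) (hM : IsOrliczFunction M) (p : ℝ) (hp : 1 ≤ p) :
    ∃ inst : MetricSpace (CpM M p),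
      (∀ a b : CpM M p, @dist _ inst.toDist a b = eta1 M p a.1 b.1) ∧
        @CompleteSpace _ inst.toUniformSpace :=
  ⟨CpM.metricSpace hM hp, fun a b => (eta1_eq_luxemburg (by linarith) a.1 b.1).symm,
    CpM.completeSpace hM hp⟩
end

section
/- Let M be an Orlicz function, 1 ≤ p < ∞ and m ≥ 1, n ≥ 1 integers. Then O_p(M, Δ_m^n) = { real sequences x = (x_k)_{k≥1} : there exists ρ > 0 with Σ_{i=1}^∞ (1/i)(Σ_{k=1}^{i} M(|Δ_m^n x_k|/ρ))^p < ∞ } is a complete metric space with respect to the metric f₄(x,y) = Σ_{r=1}^{mn} |x_r − y_r| + inf{ ρ > 0 : (Σ_{i=1}^∞ (1/i)(Σ_{k=1}^{i} M(|Δ_m^n x_k − Δ_m^n y_k|/ρ))^p)^{1/p} ≤ 1 }. -/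
/-!
Statement 10 (Paper: Proposition 3.2(iv)).  `O_p(M, Δ_m^n)` is a complete
metric space with respect to the metric `f₄`.  Sequences are indexed so that
`x k` represents the paper's `x_{k+1}`.
-/

open scoped ENNReal

/-- The generalized difference operator. -/
def delta (m : ℕ) : ℕ → (ℕ → ℝ) → ℕ → ℝ
  | 0, x => x
  | n + 1, x => fun k => delta m n x k - delta m n x (k + m)

/-- `∑_{i=1}^∞ (1/i) (∑_{k=1}^{i} M (|x_k| / ρ))^p`, valued in `ℝ≥0∞`. -/
noncomputable def opSum (M : ℝ → ℝ) (p : ℝ) (x : ℕ → ℝ) (ρ : ℝ) : ℝ≥0∞ :=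
  ∑' i : ℕ, ENNReal.ofReal (1 / (i + 1 : ℝ)) *
    ENNReal.ofReal (∑ k ∈ Finset.range (i + 1), M (|x k| / ρ)) ^ p

/-- The space `O_p(M, Δ_m^n)`. -/
def OpMDelta (M : ℝ → ℝ) (p : ℝ) (m n : ℕ) : Set (ℕ → ℝ) :=
  {x | ∃ ρ > 0, opSum M p (delta m n x) ρ < ⊤}

/-- The metric `f₄`. -/
noncomputable def f4 (M : ℝ → ℝ) (p : ℝ) (m n : ℕ) (x y : ℕ → ℝ) : ℝ :=
  (∑ r ∈ Finset.range (m * n), |x r - y r|) +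
    sInf {ρ : ℝ | 0 < ρ ∧
      (opSum M p (fun k => delta m n x k - delta m n y k) ρ) ^ (1 / p) ≤ 1}

/-!
The modular `ϱ(z, ρ) = Σᵢ (1/i) (Σ_{k ≤ i} M(|z_k| / ρ))^p` is jointly convex in `(z, ρ)`
(convexity of `M` and of `t ↦ t^p`), so the Luxemburg functional
`N(z) = inf {ρ > 0 : ϱ(z, ρ) ≤ 1}`, which is the second summand of `f₄`, is subadditive; this
gives the triangle inequality.

Since `M → ∞`, each coordinate `z_k` is bounded by a constant times `N(z)`. As `x` is recovered
from its first `m n` terms and from `Δ_m^n x` through `x_{k+m} = x_k - Δ_m^1 x_k`, every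
coordinate of `x - y` is bounded by a constant times `f₄(x, y)`. Hence `f₄` separates points and
an `f₄`-Cauchy sequence converges coordinatewise. Continuity of `M` gives Fatou's lemma for the
modular, so `f₄` is lower semicontinuous under coordinatewise convergence: the coordinatewise
limit lies in `O_p(M, Δ_m^n)` and is the `f₄`-limit.
-/

open Filter Topology Finset
open scoped Pointwise

lemma IsOrliczFunction.nonneg_s10 {M : ℝ → ℝ} (hM : IsOrliczFunction M) {t : ℝ} (ht : 0 ≤ t) :
    0 ≤ M t := by
  obtain ⟨-, hmono, -, hzero, -, -⟩ := hM
  simpa [hzero] using hmono Set.self_mem_Ici ht ht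

lemma IsOrliczFunction.apply_abs_add_div_le {M : ℝ → ℝ} (hM : IsOrliczFunction M)
    (a b : ℝ) {ρ₁ ρ₂ : ℝ} (h₁ : 0 < ρ₁) (h₂ : 0 < ρ₂) :
    M (|a + b| / (ρ₁ + ρ₂)) ≤
      ρ₁ / (ρ₁ + ρ₂) * M (|a| / ρ₁) + ρ₂ / (ρ₁ + ρ₂) * M (|b| / ρ₂) := by
  obtain ⟨-, hmono, hconv, -, -, -⟩ := hM
  have hρ : 0 < ρ₁ + ρ₂ := add_pos h₁ h₂
  have hsplit : ρ₁ / (ρ₁ + ρ₂) * (|a| / ρ₁) + ρ₂ / (ρ₁ + ρ₂) * (|b| / ρ₂) =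
      (|a| + |b|) / (ρ₁ + ρ₂) := by
    field_simp
  calc M (|a + b| / (ρ₁ + ρ₂))
      ≤ M (ρ₁ / (ρ₁ + ρ₂) * (|a| / ρ₁) + ρ₂ / (ρ₁ + ρ₂) * (|b| / ρ₂)) := by
        refine hmono (Set.mem_Ici.2 (by positivity)) (Set.mem_Ici.2 (by positivity)) ?_
        rw [hsplit]
        gcongr
        exact abs_add_le a b
    _ ≤ _ := hconv.2 (Set.mem_Ici.2 (by positivity)) (Set.mem_Ici.2 (by positivity))
        (by positivity) (by positivity) (by field_simp)

lemma ENNReal.ofReal_div_add_ofReal_div_eq_one {a b : ℝ} (ha : 0 < a) (hb : 0 < b) :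
    ENNReal.ofReal (a / (a + b)) + ENNReal.ofReal (b / (a + b)) = 1 := by
  rw [← ENNReal.ofReal_add (by positivity) (by positivity), ← add_div, div_self (by positivity),
    ENNReal.ofReal_one]

section Modular

variable {M : ℝ → ℝ} {p : ℝ}

lemma opSum_neg (x : ℕ → ℝ) (ρ : ℝ) : opSum M p (-x) ρ = opSum M p x ρ := by
  simp only [opSum, Pi.neg_apply, abs_neg]

lemma opSum_zero (hM : IsOrliczFunction M) (hp : 0 < p) (ρ : ℝ) : opSum M p 0 ρ = 0 := by
  obtain ⟨-, -, -, hzero, -, -⟩ := hM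
  simp [opSum, hzero, ENNReal.zero_rpow_of_pos hp]

lemma opSum_le_of_le (hM : IsOrliczFunction M) (hp : 0 ≤ p) (x : ℕ → ℝ) {ρ ρ' : ℝ}
    (hρ : 0 < ρ) (h : ρ ≤ ρ') : opSum M p x ρ' ≤ opSum M p x ρ := by
  obtain ⟨-, hmono, -, -, -, -⟩ := hM
  refine ENNReal.tsum_le_tsum fun i => ?_
  gcongr with k
  exact hmono (Set.mem_Ici.2 (div_nonneg (abs_nonneg _) (hρ.trans_le h).le))
    (Set.mem_Ici.2 (by positivity)) (div_le_div_of_nonneg_left (abs_nonneg _) hρ h)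

lemma opSum_add_le (hM : IsOrliczFunction M) (hp : 1 ≤ p) (x y : ℕ → ℝ) {ρ₁ ρ₂ : ℝ}
    (h₁ : 0 < ρ₁) (h₂ : 0 < ρ₂) :
    opSum M p (x + y) (ρ₁ + ρ₂) ≤ ENNReal.ofReal (ρ₁ / (ρ₁ + ρ₂)) * opSum M p x ρ₁ +
      ENNReal.ofReal (ρ₂ / (ρ₁ + ρ₂)) * opSum M p y ρ₂ := by
  set l₁ := ENNReal.ofReal (ρ₁ / (ρ₁ + ρ₂))
  set l₂ := ENNReal.ofReal (ρ₂ / (ρ₁ + ρ₂))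
  have hl : l₁ + l₂ = 1 := ENNReal.ofReal_div_add_ofReal_div_eq_one h₁ h₂
  unfold opSum
  rw [← ENNReal.tsum_mul_left, ← ENNReal.tsum_mul_left, ← ENNReal.tsum_add]
  refine ENNReal.tsum_le_tsum fun i => ?_
  set w := ENNReal.ofReal (1 / (i + 1 : ℝ))
  set A := ENNReal.ofReal (∑ k ∈ range (i + 1), M (|x k| / ρ₁))
  set B := ENNReal.ofReal (∑ k ∈ range (i + 1), M (|y k| / ρ₂))
  have hsum : ENNReal.ofReal (∑ k ∈ range (i + 1), M (|(x + y) k| / (ρ₁ + ρ₂))) ≤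
      l₁ * A + l₂ * B := by
    have hA : 0 ≤ ∑ k ∈ range (i + 1), M (|x k| / ρ₁) :=
      sum_nonneg fun k _ => hM.nonneg_s10 (by positivity)
    have hB : 0 ≤ ∑ k ∈ range (i + 1), M (|y k| / ρ₂) :=
      sum_nonneg fun k _ => hM.nonneg_s10 (by positivity)
    rw [← ENNReal.ofReal_mul (by positivity), ← ENNReal.ofReal_mul (by positivity),
      ← ENNReal.ofReal_add (by positivity) (by positivity), mul_sum, mul_sum, ← sum_add_distrib]
    refine ENNReal.ofReal_le_ofReal (sum_le_sum fun k _ => ?_)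
    exact hM.apply_abs_add_div_le (x k) (y k) h₁ h₂
  calc w * ENNReal.ofReal (∑ k ∈ range (i + 1), M (|(x + y) k| / (ρ₁ + ρ₂))) ^ p
      ≤ w * (l₁ * A + l₂ * B) ^ p := by gcongr
    _ ≤ w * (l₁ * A ^ p + l₂ * B ^ p) := by
        gcongr
        exact ENNReal.rpow_arith_mean_le_arith_mean2_rpow _ _ _ _ hl hp
    _ = l₁ * (w * A ^ p) + l₂ * (w * B ^ p) := by ring

lemma apply_le_of_opSum_le_one (hM : IsOrliczFunction M) (hp : 0 < p) {z : ℕ → ℝ} {ρ : ℝ}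
    (hρ : 0 ≤ ρ) (h : opSum M p z ρ ≤ 1) {i k : ℕ} (hk : k ≤ i) :
    M (|z k| / ρ) ≤ ((i : ℝ) + 1) ^ p⁻¹ := by
  set A := ∑ j ∈ range (i + 1), M (|z j| / ρ)
  have hA : 0 ≤ A := sum_nonneg fun j _ => hM.nonneg_s10 (by positivity)
  have hterm : ENNReal.ofReal (1 / (i + 1 : ℝ)) * ENNReal.ofReal A ^ p ≤ 1 :=
    (ENNReal.le_tsum i).trans h
  rw [ENNReal.ofReal_rpow_of_nonneg hA hp.le, ← ENNReal.ofReal_mul (by positivity),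
    ENNReal.ofReal_le_one, one_div, inv_mul_le_iff₀ (by positivity), mul_one] at hterm
  calc M (|z k| / ρ) ≤ A :=
        single_le_sum (f := fun j => M (|z j| / ρ)) (fun j _ => hM.nonneg_s10 (by positivity))
          (mem_range.2 (Nat.lt_succ_of_le hk))
    _ ≤ ((i : ℝ) + 1) ^ p⁻¹ := (Real.le_rpow_inv_iff_of_pos hA (by positivity) hp).2 hterm

lemma opSum_le_of_tendsto (hM : IsOrliczFunction M) {z : ℕ → ℕ → ℝ} {zl : ℕ → ℝ}
    (hz : Tendsto z atTop (𝓝 zl)) {ρ : ℝ} (hρ : 0 ≤ ρ) {c : ℝ≥0∞}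
    (h : ∀ᶠ t in atTop, opSum M p (z t) ρ ≤ c) : opSum M p zl ρ ≤ c := by
  obtain ⟨hcont, -, -, -, -, -⟩ := hM
  have hM' : Continuous fun s : ℝ => M (|s| / ρ) :=
    hcont.comp_continuous (by fun_prop) fun s => div_nonneg (abs_nonneg s) hρ
  have hterm : ∀ i : ℕ, Continuous fun w : ℕ → ℝ => ENNReal.ofReal (1 / (i + 1 : ℝ)) *
      ENNReal.ofReal (∑ k ∈ range (i + 1), M (|w k| / ρ)) ^ p := fun i =>
    (ENNReal.continuous_const_mul ENNReal.ofReal_ne_top).comp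
      ((ENNReal.continuous_rpow_const).comp (ENNReal.continuous_ofReal.comp
        (continuous_finsetSum _ fun k _ => hM'.comp (continuous_apply k))))
  refine ENNReal.tsum_le_of_sum_range_le fun N => le_of_tendsto
    (((continuous_finsetSum _ fun i _ => hterm i).tendsto zl).comp hz) ?_
  exact h.mono fun t ht => (ENNReal.sum_le_tsum _).trans ht

end Modular

def unitScales (M : ℝ → ℝ) (p : ℝ) (z : ℕ → ℝ) : Set ℝ :=
  {ρ | 0 < ρ ∧ opSum M p z ρ ≤ 1}

noncomputable def luxemburgNorm (M : ℝ → ℝ) (p : ℝ) (z : ℕ → ℝ) : ℝ :=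
  sInf (unitScales M p z)

section Luxemburg

variable {M : ℝ → ℝ} {p : ℝ}

lemma bddBelow_unitScales (z : ℕ → ℝ) : BddBelow (unitScales M p z) :=
  ⟨0, fun _ hρ => hρ.1.le⟩

lemma unitScales_neg (z : ℕ → ℝ) : unitScales M p (-z) = unitScales M p z := by
  simp only [unitScales, opSum_neg]

lemma unitScales_zero (hM : IsOrliczFunction M) (hp : 0 < p) :
    unitScales M p 0 = Set.Ioi 0 := by
  ext ρ
  simp [unitScales, opSum_zero hM hp]

lemma mem_unitScales_of_le (hM : IsOrliczFunction M) (hp : 0 ≤ p) {z : ℕ → ℝ} {ρ ρ' : ℝ}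
    (hρ : ρ ∈ unitScales M p z) (h : ρ ≤ ρ') : ρ' ∈ unitScales M p z :=
  ⟨hρ.1.trans_le h, (opSum_le_of_le hM hp z hρ.1 h).trans hρ.2⟩

lemma add_mem_unitScales (hM : IsOrliczFunction M) (hp : 1 ≤ p) {x y : ℕ → ℝ} {ρ₁ ρ₂ : ℝ}
    (hx : ρ₁ ∈ unitScales M p x) (hy : ρ₂ ∈ unitScales M p y) :
    ρ₁ + ρ₂ ∈ unitScales M p (x + y) := by
  refine ⟨add_pos hx.1 hy.1, (opSum_add_le hM hp x y hx.1 hy.1).trans ?_⟩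
  calc ENNReal.ofReal (ρ₁ / (ρ₁ + ρ₂)) * opSum M p x ρ₁ +
        ENNReal.ofReal (ρ₂ / (ρ₁ + ρ₂)) * opSum M p y ρ₂
      ≤ ENNReal.ofReal (ρ₁ / (ρ₁ + ρ₂)) * 1 + ENNReal.ofReal (ρ₂ / (ρ₁ + ρ₂)) * 1 := by
        gcongr
        exacts [hx.2, hy.2]
    _ = 1 := by rw [mul_one, mul_one, ENNReal.ofReal_div_add_ofReal_div_eq_one hx.1 hy.1]

lemma unitScales_nonempty_sub (hM : IsOrliczFunction M) (hp : 1 ≤ p) {x y : ℕ → ℝ}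
    (hx : (unitScales M p x).Nonempty) (hy : (unitScales M p y).Nonempty) :
    (unitScales M p (x - y)).Nonempty := by
  obtain ⟨ρ₁, hρ₁⟩ := hx
  obtain ⟨ρ₂, hρ₂⟩ := hy
  rw [← unitScales_neg] at hρ₂
  exact ⟨ρ₁ + ρ₂, sub_eq_add_neg x y ▸ add_mem_unitScales hM hp hρ₁ hρ₂⟩

lemma unitScales_nonempty_iff (hM : IsOrliczFunction M) (hp : 1 ≤ p) {z : ℕ → ℝ} :
    (unitScales M p z).Nonempty ↔ ∃ ρ > 0, opSum M p z ρ < ⊤ := by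
  refine ⟨fun ⟨ρ, hρ, hz⟩ => ⟨ρ, hρ, hz.trans_lt ENNReal.one_lt_top⟩, ?_⟩
  rintro ⟨ρ, hρ, hz⟩
  set G := (opSum M p z ρ).toReal
  have hG : 0 ≤ G := ENNReal.toReal_nonneg
  have hρ' : 0 < ρ * (G + 1) := by positivity
  -- `opSum_add_le` with `y = 0`: dilating `ρ` by the factor `G + 2` divides the modular by `G + 2`
  have hdil := opSum_add_le hM hp z 0 hρ hρ'
  rw [add_zero, opSum_zero hM (by linarith), mul_zero, add_zero,
    ← ENNReal.ofReal_toReal hz.ne, ← ENNReal.ofReal_mul (by positivity)] at hdil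
  refine ⟨ρ + ρ * (G + 1), add_pos hρ hρ', hdil.trans (ENNReal.ofReal_le_one.2 ?_)⟩
  rw [div_mul_eq_mul_div, div_le_one (add_pos hρ hρ')]
  nlinarith

lemma exists_abs_le_mul_of_mem_unitScales (hM : IsOrliczFunction M) (hp : 0 < p) (i : ℕ) :
    ∃ T > 0, ∀ z ρ, ρ ∈ unitScales M p z → ∀ k ≤ i, |z k| ≤ T * ρ := by
  have htop : Tendsto M atTop atTop := hM.2.2.2.2.2
  obtain ⟨T, hT⟩ := (htop.eventually_gt_atTop (((i : ℝ) + 1) ^ p⁻¹)).exists_forall_of_atTop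
  refine ⟨max T 1, by positivity, fun z ρ hρ k hk => ?_⟩
  by_contra! hlt
  have hT' : T ≤ |z k| / ρ := by
    rw [le_div_iff₀ hρ.1]
    nlinarith [le_max_left T 1, hρ.1]
  exact (hT _ hT').not_ge (apply_le_of_opSum_le_one hM hp hρ.1.le hρ.2 hk)

lemma luxemburgNorm_nonneg (z : ℕ → ℝ) : 0 ≤ luxemburgNorm M p z :=
  Real.sInf_nonneg fun _ hρ => hρ.1.le

lemma luxemburgNorm_le {z : ℕ → ℝ} {ρ : ℝ} (hρ : ρ ∈ unitScales M p z) :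
    luxemburgNorm M p z ≤ ρ :=
  csInf_le (bddBelow_unitScales z) hρ

lemma mem_unitScales_of_luxemburgNorm_lt (hM : IsOrliczFunction M) (hp : 0 ≤ p)
    {z : ℕ → ℝ} (hz : (unitScales M p z).Nonempty) {ρ : ℝ} (h : luxemburgNorm M p z < ρ) :
    ρ ∈ unitScales M p z := by
  obtain ⟨ρ', hρ', hlt⟩ := exists_lt_of_csInf_lt hz h
  exact mem_unitScales_of_le hM hp hρ' hlt.le

lemma luxemburgNorm_zero (hM : IsOrliczFunction M) (hp : 0 < p) : luxemburgNorm M p 0 = 0 := by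
  rw [luxemburgNorm, unitScales_zero hM hp, csInf_Ioi]

lemma luxemburgNorm_neg (z : ℕ → ℝ) : luxemburgNorm M p (-z) = luxemburgNorm M p z := by
  rw [luxemburgNorm, luxemburgNorm, unitScales_neg]

lemma luxemburgNorm_add_le (hM : IsOrliczFunction M) (hp : 1 ≤ p) {x y : ℕ → ℝ}
    (hx : (unitScales M p x).Nonempty) (hy : (unitScales M p y).Nonempty) :
    luxemburgNorm M p (x + y) ≤ luxemburgNorm M p x + luxemburgNorm M p y := by
  rw [luxemburgNorm, luxemburgNorm, luxemburgNorm,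
    ← csInf_add hx (bddBelow_unitScales x) hy (bddBelow_unitScales y)]
  exact csInf_le_csInf (bddBelow_unitScales _) (hx.add hy)
    (Set.add_subset_iff.2 fun _ hρ₁ _ hρ₂ => add_mem_unitScales hM hp hρ₁ hρ₂)

lemma exists_abs_le_mul_luxemburgNorm (hM : IsOrliczFunction M) (hp : 0 < p) (i : ℕ) :
    ∃ T > 0, ∀ z, (unitScales M p z).Nonempty → ∀ k ≤ i, |z k| ≤ T * luxemburgNorm M p z := by
  obtain ⟨T, hT, hTz⟩ := exists_abs_le_mul_of_mem_unitScales hM hp i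
  refine ⟨T, hT, fun z hz k hk => ?_⟩
  rw [← div_le_iff₀' hT]
  exact le_csInf hz fun ρ hρ => (div_le_iff₀' hT).2 (hTz z ρ hρ k hk)

lemma mem_unitScales_of_tendsto (hM : IsOrliczFunction M) (hp : 0 ≤ p) {z : ℕ → ℕ → ℝ}
    {zl : ℕ → ℝ} (hz : Tendsto z atTop (𝓝 zl)) (hne : ∀ t, (unitScales M p (z t)).Nonempty)
    {c : ℕ → ℝ} {c₀ : ℝ} (hc : Tendsto c atTop (𝓝 c₀))
    (hle : ∀ᶠ t in atTop, luxemburgNorm M p (z t) ≤ c t) {ρ : ℝ} (hρ : c₀ < ρ) :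
    ρ ∈ unitScales M p zl := by
  have hlt : ∀ᶠ t in atTop, luxemburgNorm M p (z t) < ρ :=
    (hle.and (hc.eventually (gt_mem_nhds hρ))).mono fun t ht => ht.1.trans_lt ht.2
  obtain ⟨t, ht⟩ := hlt.exists
  refine ⟨(luxemburgNorm_nonneg _).trans_lt ht, opSum_le_of_tendsto hM hz ?_ ?_⟩
  · exact ((luxemburgNorm_nonneg _).trans ht.le)
  · exact hlt.mono fun t ht => (mem_unitScales_of_luxemburgNorm_lt hM hp (hne t) ht).2

end Luxemburg

section Delta

variable {m : ℕ}

lemma delta_sub (m n : ℕ) (x y : ℕ → ℝ) : delta m n (x - y) = delta m n x - delta m n y := by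
  induction n with
  | zero => rfl
  | succ n ih =>
    funext k
    simp only [delta, ih, Pi.sub_apply]
    ring

lemma delta_succ_eq_delta_delta_one (m n : ℕ) (x : ℕ → ℝ) :
    delta m (n + 1) x = delta m n (delta m 1 x) := by
  induction n with
  | zero => rfl
  | succ n ih =>
    show (fun k => delta m (n + 1) x k - delta m (n + 1) x (k + m)) = _
    rw [ih]
    rfl

lemma continuous_delta (m n : ℕ) : Continuous (delta m n) := by
  induction n with
  | zero => exact continuous_id
  | succ n ih =>
    exact continuous_pi fun k =>
      ((continuous_apply k).comp ih).sub ((continuous_apply (k + m)).comp ih)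

/-- Induction along `x (j + m) = x j - Δ_m^1 x j`. -/
lemma abs_le_sum_range_add_sum_range_delta_one (hm : 0 < m) (x : ℕ → ℝ) (i : ℕ) :
    |x i| ≤ ∑ r ∈ range m, |x r| + ∑ k ∈ range i, |delta m 1 x k| := by
  induction i using Nat.strong_induction_on with
  | _ i ih =>
  rcases lt_or_ge i m with hi | hi
  · exact (single_le_sum (f := fun r => |x r|) (fun r _ => abs_nonneg _) (mem_range.2 hi)).trans
      (le_add_of_nonneg_right (sum_nonneg fun _ _ => abs_nonneg _))
  obtain ⟨j, rfl⟩ : ∃ j, i = j + m := ⟨i - m, by omega⟩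
  have hx : x (j + m) = x j - delta m 1 x j := by simp [delta]
  calc |x (j + m)| ≤ |x j| + |delta m 1 x j| := hx ▸ abs_sub _ _
    _ ≤ ∑ r ∈ range m, |x r| + ∑ k ∈ range j, |delta m 1 x k| + |delta m 1 x j| := by
        gcongr
        exact ih j (by omega)
    _ = ∑ r ∈ range m, |x r| + ∑ k ∈ range (j + 1), |delta m 1 x k| := by
        rw [sum_range_succ, add_assoc]
    _ ≤ ∑ r ∈ range m, |x r| + ∑ k ∈ range (j + m), |delta m 1 x k| :=
        add_le_add le_rfl (sum_le_sum_of_subset_of_nonneg (f := fun k => |delta m 1 x k|)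
          (range_mono (by omega)) fun _ _ _ => abs_nonneg _)

lemma sum_range_abs_le_delta_one (hm : 0 < m) (x : ℕ → ℝ) (j : ℕ) :
    ∑ i ∈ range j, |x i| ≤
      j * (∑ r ∈ range m, |x r| + ∑ k ∈ range j, |delta m 1 x k|) := by
  have h := sum_le_card_nsmul (range j) (fun i => |x i|)
    (∑ r ∈ range m, |x r| + ∑ k ∈ range j, |delta m 1 x k|) fun i hi => by
      refine (abs_le_sum_range_add_sum_range_delta_one hm x i).trans ?_
      exact add_le_add le_rfl (sum_le_sum_of_subset_of_nonneg (f := fun k => |delta m 1 x k|)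
        (range_mono (mem_range.1 hi).le) fun _ _ _ => abs_nonneg _)
  rwa [card_range, nsmul_eq_mul] at h

lemma exists_sum_range_abs_le_delta (hm : 0 < m) (n j : ℕ) : ∃ C, 0 ≤ C ∧ ∀ x : ℕ → ℝ,
    ∑ i ∈ range j, |x i| ≤
      C * (∑ r ∈ range (m * n), |x r| + ∑ k ∈ range j, |delta m n x k|) := by
  induction n with
  | zero => exact ⟨1, zero_le_one, fun x => by simp [delta]⟩
  | succ n ih =>
    obtain ⟨C, hC, hCx⟩ := ih
    refine ⟨j * (1 + 2 * C), by positivity, fun x => ?_⟩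
    set P := ∑ r ∈ range (m * (n + 1)), |x r|
    set D := ∑ k ∈ range j, |delta m (n + 1) x k|
    have hsplit : P = ∑ r ∈ range m, |x r| + ∑ r ∈ range (m * n), |x (m + r)| := by
      rw [← sum_range_add, add_comm m, ← mul_add_one]
    have hhead : ∑ r ∈ range m, |x r| ≤ P := by
      rw [hsplit]; exact le_add_of_nonneg_right (sum_nonneg fun _ _ => abs_nonneg _)
    have htail : ∑ r ∈ range (m * n), |x (m + r)| ≤ P := by
      rw [hsplit]; exact le_add_of_nonneg_left (sum_nonneg fun _ _ => abs_nonneg _)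
    have hinit : ∑ r ∈ range (m * n), |x r| ≤ P :=
      sum_le_sum_of_subset_of_nonneg (range_mono (by nlinarith)) fun _ _ _ => abs_nonneg _
    have hv : ∑ r ∈ range (m * n), |delta m 1 x r| ≤ 2 * P := by
      calc ∑ r ∈ range (m * n), |delta m 1 x r|
          ≤ ∑ r ∈ range (m * n), (|x r| + |x (m + r)|) :=
            sum_le_sum fun r _ => by simpa [delta, add_comm] using abs_sub (x r) (x (r + m))
        _ ≤ 2 * P := by rw [sum_add_distrib]; linarith
    have hD : 0 ≤ D := sum_nonneg fun _ _ => abs_nonneg _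
    have hx := sum_range_abs_le_delta_one hm x j
    have hvx := hCx (delta m 1 x)
    rw [← delta_succ_eq_delta_delta_one] at hvx
    calc ∑ i ∈ range j, |x i|
        ≤ j * (P + C * (2 * P + D)) := by
          refine hx.trans (mul_le_mul_of_nonneg_left ?_ (by positivity))
          gcongr
          exact hvx.trans (by gcongr)
      _ ≤ j * (1 + 2 * C) * (P + D) := by
          rw [mul_assoc]
          gcongr
          nlinarith

end Delta

section Metric

variable {M : ℝ → ℝ} {p : ℝ} {m n : ℕ}

lemma f4_eq (hp : 0 < p) (x y : ℕ → ℝ) :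
    f4 M p m n x y = ∑ r ∈ range (m * n), |x r - y r| +
      luxemburgNorm M p (delta m n x - delta m n y) := by
  unfold f4 luxemburgNorm unitScales
  congr 3 with ρ
  rw [one_div, ENNReal.rpow_inv_le_iff hp, ENNReal.one_rpow]
  rfl

lemma mem_OpMDelta_iff (hM : IsOrliczFunction M) (hp : 1 ≤ p) {x : ℕ → ℝ} :
    x ∈ OpMDelta M p m n ↔ (unitScales M p (delta m n x)).Nonempty :=
  (unitScales_nonempty_iff hM hp).symm

lemma f4_self (hM : IsOrliczFunction M) (hp : 0 < p) (x : ℕ → ℝ) : f4 M p m n x x = 0 := by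
  simp [f4_eq hp, luxemburgNorm_zero hM hp]

lemma f4_comm (hp : 0 < p) (x y : ℕ → ℝ) : f4 M p m n x y = f4 M p m n y x := by
  rw [f4_eq hp, f4_eq hp, ← neg_sub, luxemburgNorm_neg]
  simp only [abs_sub_comm]

lemma f4_triangle (hM : IsOrliczFunction M) (hp : 1 ≤ p) {x y z : ℕ → ℝ}
    (hx : x ∈ OpMDelta M p m n) (hy : y ∈ OpMDelta M p m n) (hz : z ∈ OpMDelta M p m n) :
    f4 M p m n x z ≤ f4 M p m n x y + f4 M p m n y z := by
  rw [mem_OpMDelta_iff hM hp] at hx hy hz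
  have hN := luxemburgNorm_add_le hM hp (unitScales_nonempty_sub hM hp hx hy)
    (unitScales_nonempty_sub hM hp hy hz)
  rw [sub_add_sub_cancel] at hN
  have hP : ∑ r ∈ range (m * n), |x r - z r| ≤
      ∑ r ∈ range (m * n), |x r - y r| + ∑ r ∈ range (m * n), |y r - z r| := by
    rw [← sum_add_distrib]
    exact sum_le_sum fun r _ => abs_sub_le _ _ _
  rw [f4_eq (by linarith), f4_eq (by linarith), f4_eq (by linarith)]
  linarith

/-- The first `m * n` coordinates enter `f4` directly; the others are recovered from them and
from `Δ_m^n x`, whose coordinates are controlled by the Luxemburg norm. -/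
lemma exists_abs_sub_le_mul_f4 (hM : IsOrliczFunction M) (hp : 1 ≤ p) (hm : 0 < m) (i : ℕ) :
    ∃ K, 0 ≤ K ∧ ∀ x ∈ OpMDelta M p m n, ∀ y ∈ OpMDelta M p m n,
      |x i - y i| ≤ K * f4 M p m n x y := by
  obtain ⟨C, hC, hCx⟩ := exists_sum_range_abs_le_delta hm n (i + 1)
  obtain ⟨T, hT, hTz⟩ := exists_abs_le_mul_luxemburgNorm hM (p := p) (by linarith) i
  refine ⟨C * (1 + (i + 1) * T), by positivity, fun x hx y hy => ?_⟩
  rw [mem_OpMDelta_iff hM hp] at hx hy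
  set P := ∑ r ∈ range (m * n), |x r - y r|
  set N := luxemburgNorm M p (delta m n x - delta m n y)
  have hP : 0 ≤ P := sum_nonneg fun _ _ => abs_nonneg _
  have hN : 0 ≤ N := luxemburgNorm_nonneg _
  have hD : ∑ k ∈ range (i + 1), |delta m n (x - y) k| ≤ (i + 1) * (T * N) := by
    have h := sum_le_card_nsmul (range (i + 1)) (fun k => |delta m n (x - y) k|) (T * N)
      fun k hk => by
        rw [delta_sub]
        exact hTz _ (unitScales_nonempty_sub hM hp hx hy) k (Nat.lt_succ_iff.1 (mem_range.1 hk))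
    rwa [card_range, nsmul_eq_mul, Nat.cast_add_one] at h
  calc |x i - y i| ≤ ∑ k ∈ range (i + 1), |(x - y) k| :=
        single_le_sum (f := fun k => |(x - y) k|) (fun _ _ => abs_nonneg _) (self_mem_range_succ i)
    _ ≤ C * (P + ∑ k ∈ range (i + 1), |delta m n (x - y) k|) := hCx (x - y)
    _ ≤ C * (P + (i + 1) * (T * N)) := by gcongr
    _ ≤ C * (1 + (i + 1) * T) * (P + N) := by
        rw [mul_assoc]
        gcongr
        nlinarith [mul_nonneg (by positivity : (0 : ℝ) ≤ (i + 1) * T) hP]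
    _ = _ := by rw [f4_eq (by linarith)]

noncomputable abbrev f4MetricSpace (hM : IsOrliczFunction M) (hp : 1 ≤ p) (hm : 0 < m) :
    MetricSpace (OpMDelta M p m n) where
  dist x y := f4 M p m n x y
  dist_self x := f4_self hM (by linarith) x
  dist_comm x y := f4_comm (by linarith) x y
  dist_triangle x y z := f4_triangle hM hp x.2 y.2 z.2
  eq_of_dist_eq_zero {x y} h := by
    refine Subtype.ext (funext fun i => ?_)
    obtain ⟨K, -, hK⟩ := exists_abs_sub_le_mul_f4 hM hp hm i
    have := hK x x.2 y y.2
    rw [h, mul_zero] at this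
    exact sub_eq_zero.1 (abs_nonpos_iff.1 this)

lemma mem_OpMDelta_and_f4_le_of_tendsto (hM : IsOrliczFunction M) (hp : 1 ≤ p)
    {a : ℕ → ℝ} (ha : a ∈ OpMDelta M p m n) {u : ℕ → ℕ → ℝ}
    (hu : ∀ t, u t ∈ OpMDelta M p m n) {x : ℕ → ℝ} (hux : Tendsto u atTop (𝓝 x)) {c : ℝ}
    (hc : ∀ᶠ t in atTop, f4 M p m n a (u t) ≤ c) :
    x ∈ OpMDelta M p m n ∧ f4 M p m n a x ≤ c := by
  have hp₀ : 0 < p := by linarith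
  set P : (ℕ → ℝ) → ℝ := fun y => ∑ r ∈ range (m * n), |a r - y r|
  have hP : Tendsto (fun t => P (u t)) atTop (𝓝 (P x)) :=
    ((continuous_finsetSum _ fun r _ =>
      (continuous_const.sub (continuous_apply r)).abs).tendsto x).comp hux
  have hΔ : Tendsto (fun t => delta m n a - delta m n (u t)) atTop
      (𝓝 (delta m n a - delta m n x)) :=
    tendsto_const_nhds.sub (((continuous_delta m n).tendsto x).comp hux)
  rw [mem_OpMDelta_iff hM hp] at ha ⊢
  have hmem : ∀ ρ, c - P x < ρ → ρ ∈ unitScales M p (delta m n a - delta m n x) :=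
    fun ρ hρ => mem_unitScales_of_tendsto hM hp₀.le hΔ
      (fun t => unitScales_nonempty_sub hM hp ha ((mem_OpMDelta_iff hM hp).1 (hu t)))
      (tendsto_const_nhds.sub hP) (hc.mono fun t ht => by rw [f4_eq hp₀] at ht; linarith) hρ
  have hne : (unitScales M p (delta m n a - delta m n x)).Nonempty := ⟨_, hmem _ (lt_add_one _)⟩
  refine ⟨sub_sub_cancel (delta m n a) (delta m n x) ▸ unitScales_nonempty_sub hM hp ha hne, ?_⟩
  have hN : luxemburgNorm M p (delta m n a - delta m n x) ≤ c - P x :=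
    le_of_forall_gt_imp_ge_of_dense fun ρ hρ => luxemburgNorm_le (hmem ρ hρ)
  rw [f4_eq hp₀]
  linarith

lemma completeSpace_f4MetricSpace (hM : IsOrliczFunction M) (hp : 1 ≤ p) (hm : 0 < m) :
    @CompleteSpace _ (f4MetricSpace (n := n) hM hp hm).toUniformSpace := by
  let _ := f4MetricSpace (n := n) hM hp hm
  refine Metric.complete_of_cauchySeq_tendsto fun u hu => ?_
  have hcoord : ∀ i, ∃ L, Tendsto (fun s => (u s).1 i) atTop (𝓝 L) := fun i => by
    obtain ⟨K, hK₀, hK⟩ := exists_abs_sub_le_mul_f4 (n := n) hM hp hm i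
    refine cauchySeq_tendsto_of_complete (Metric.cauchySeq_iff'.2 fun ε hε => ?_)
    obtain ⟨N, hN⟩ := Metric.cauchySeq_iff'.1 hu (ε / (K + 1)) (by positivity)
    refine ⟨N, fun s hs => ?_⟩
    calc dist ((u s).1 i) ((u N).1 i) ≤ K * dist (u s) (u N) := hK _ (u s).2 _ (u N).2
      _ ≤ K * (ε / (K + 1)) := by gcongr; exact (hN s hs).le
      _ < ε := by rw [mul_div_assoc', div_lt_iff₀ (by positivity)]; nlinarith
  choose x hx using hcoord
  have hux : Tendsto (fun s => (u s).1) atTop (𝓝 x) := tendsto_pi_nhds.2 hx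
  have hclose : ∀ ε > 0, ∃ N, ∀ s ≥ N, x ∈ OpMDelta M p m n ∧ f4 M p m n (u s).1 x ≤ ε := by
    intro ε hε
    obtain ⟨N, hN⟩ := Metric.cauchySeq_iff.1 hu ε hε
    exact ⟨N, fun s hs => mem_OpMDelta_and_f4_le_of_tendsto hM hp (u s).2 (fun t => (u t).2)
      hux (eventually_atTop.2 ⟨N, fun t ht => (hN s hs t ht).le⟩)⟩
  obtain ⟨N, hN⟩ := hclose 1 one_pos
  refine ⟨⟨x, (hN N le_rfl).1⟩, Metric.tendsto_atTop.2 fun ε hε => ?_⟩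
  obtain ⟨N', hN'⟩ := hclose (ε / 2) (half_pos hε)
  exact ⟨N', fun s hs => (hN' s hs).2.trans_lt (half_lt_self hε)⟩

end Metric

theorem OpDelta_complete_metric_general (M : ℝ → ℝ) (hM : IsOrliczFunction M) (p : ℝ) (hp : 1 ≤ p)
    (m n : ℕ) (hm : 1 ≤ m) :
    ∃ inst : MetricSpace (OpMDelta M p m n),
      (∀ a b : OpMDelta M p m n, @dist _ inst.toDist a b = f4 M p m n a.1 b.1) ∧
        @CompleteSpace _ inst.toUniformSpace :=
  ⟨f4MetricSpace hM hp hm, fun _ _ => rfl, completeSpace_f4MetricSpace hM hp hm⟩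

theorem OpDelta_complete_metric (M : ℝ → ℝ) (hM : IsOrliczFunction M) (p : ℝ) (hp : 1 ≤ p)
    (m n : ℕ) (hm : 1 ≤ m) (hn : 1 ≤ n) :
    ∃ inst : MetricSpace (OpMDelta M p m n),
      (∀ a b : OpMDelta M p m n, @dist _ inst.toDist a b = f4 M p m n a.1 b.1) ∧
        @CompleteSpace _ inst.toUniformSpace :=
  OpDelta_complete_metric_general M hM p hp m n hm
end

section
/- Let M(x) = x for all x ∈ [0,∞) and let 1 ≤ p < ∞. The set C_p(M, Δ_3^2) = { real sequences x = (x_k)_{k≥1} : there exists ρ > 0 with Σ_{i=1}^∞ ((1/i) Σ_{k=1}^{i} M(|Δ_3^2 x_k|/ρ))^p < ∞ } is neither solid nor monotone. Concretely, the sequence x with x_k = k belongs to C_p(M, Δ_3^2), the sequence y with y_k = k for k odd and y_k = 0 for k even satisfies |y_k| ≤ |x_k| for all k and is the canonical pre-image of a step space of x, yet y does not belong to C_p(M, Δ_3^2). -/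
/-!
Statement 11 (Paper: Theorem 3.2 with Example 3.1).  With `M = id` and
`1 ≤ p < ∞`, the space `C_p(M, Δ_3^2)` is neither solid nor monotone;
the witnesses are `x_k = k` and `y` equal to `x` at odd indices and `0` at
even indices.  Sequences are indexed so that `x k` represents the paper's
`x_{k+1}` (so the paper's index `k` is odd iff `k + 1` is odd here).
-/

open scoped ENNReal

/-- The space `C_p(M, Δ_m^n)`. -/
def CpMDelta (M : ℝ → ℝ) (p : ℝ) (m n : ℕ) : Set (ℕ → ℝ) :=
  {x | ∃ ρ > 0, cesaroSum M p (delta m n x) ρ < ⊤}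

/-- A solid set of sequences. -/
def SolidSet (E : Set (ℕ → ℝ)) : Prop :=
  ∀ x ∈ E, ∀ y : ℕ → ℝ, (∀ k, |y k| ≤ |x k|) → y ∈ E

/-- A monotone set of sequences: contains the canonical pre-images of all
its step spaces. -/
def MonotoneSet (E : Set (ℕ → ℝ)) : Prop :=
  ∀ x ∈ E, ∀ J : Set ℕ, J.indicator x ∈ E

/-- The sequence `x_k = k` (0-indexed: `x k = k + 1`). -/
noncomputable def xseq : ℕ → ℝ := fun k => (k + 1 : ℝ)

/-- The sequence equal to `x_k = k` at odd paper-indices and `0` at even ones: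
the canonical pre-image of the step space of `xseq` given by the odd indices. -/
noncomputable def yseq : ℕ → ℝ := ({k : ℕ | Odd (k + 1)} : Set ℕ).indicator xseq

/-!
`Δ_3^2` annihilates the affine sequence `x_k = k`, so every Cesàro term of `x` vanishes and
`x ∈ C_p(M, Δ_3^2)`. Since `3` is odd, `y` vanishes either at `k + 3` or at both `k` and `k + 6`,
so `|Δ_3^2 y_k|` is `y_k + y_{k+6}` or `2 y_{k+3}`, at least `8` in either case; every Cesàro
term of `y` is then at least `8 / ρ`, and the series diverges for each `ρ > 0`. Since
`|1_J x| ≤ |x|`, a solid set is monotone, so this one witness disproves both properties.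
-/

theorem delta_two_apply (m : ℕ) (x : ℕ → ℝ) (k : ℕ) :
    delta m 2 x k = x k - 2 * x (k + m) + x (k + 2 * m) := by
  simp only [delta, add_assoc, ← two_mul]
  ring

theorem delta_two_affine (m : ℕ) (a b : ℝ) (k : ℕ) :
    delta m 2 (fun j => a * j + b) k = 0 := by
  rw [delta_two_apply]
  push_cast
  ring

theorem abs_indicator_le_abs (J : Set ℕ) (x : ℕ → ℝ) (k : ℕ) :
    |J.indicator x k| ≤ |x k| := by
  simpa only [Real.norm_eq_abs] using norm_indicator_le_norm_self (s := J) (f := x) (a := k)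

theorem SolidSet.monotoneSet {E : Set (ℕ → ℝ)} (hE : SolidSet E) : MonotoneSet E :=
  fun x hx J => hE x hx _ (abs_indicator_le_abs J x)

section CpMDelta

variable {M : ℝ → ℝ} {p : ℝ} {m n : ℕ} {x : ℕ → ℝ}

theorem mem_CpMDelta_of_delta_eq_zero (hM : M 0 = 0) (hp : 0 < p) (hx : delta m n x = 0) :
    x ∈ CpMDelta M p m n := by
  have hterm (i : ℕ) : cesTerm M (delta m n x) 1 i = 0 := by
    simp [cesTerm, hx, hM]
  refine ⟨1, one_pos, ?_⟩
  simp [cesaroSum, hterm, ENNReal.zero_rpow_of_pos hp]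

theorem le_cesTerm_of_le_abs (hM : Monotone M) {c ρ : ℝ} (hρ : 0 < ρ) (hc : ∀ k, c ≤ |x k|)
    (i : ℕ) : M (c / ρ) ≤ cesTerm M x ρ i := by
  have hle :
      ∑ _k ∈ Finset.range (i + 1), M (c / ρ) ≤ ∑ k ∈ Finset.range (i + 1), M (|x k| / ρ) :=
    Finset.sum_le_sum fun k _ => hM (div_le_div_of_nonneg_right (hc k) hρ.le)
  calc M (c / ρ) = 1 / (i + 1 : ℝ) * ∑ _k ∈ Finset.range (i + 1), M (c / ρ) := by
        rw [Finset.sum_const, Finset.card_range, nsmul_eq_mul]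
        push_cast
        field_simp
    _ ≤ cesTerm M x ρ i := mul_le_mul_of_nonneg_left hle (by positivity)

theorem cesaroSum_eq_top_of_le_abs (hM : Monotone M) (hMpos : ∀ t > 0, 0 < M t) (hp : 0 ≤ p)
    {c ρ : ℝ} (hc₀ : 0 < c) (hρ : 0 < ρ) (hc : ∀ k, c ≤ |x k|) :
    cesaroSum M p x ρ = ⊤ := by
  have hbound_ne : ENNReal.ofReal (M (c / ρ)) ^ p ≠ 0 :=
    (ENNReal.rpow_pos (ENNReal.ofReal_pos.2 (hMpos _ (by positivity))) ENNReal.ofReal_ne_top).ne'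
  refine top_unique ?_
  calc ⊤ = ∑' _ : ℕ, ENNReal.ofReal (M (c / ρ)) ^ p :=
        (ENNReal.tsum_const_eq_top_of_ne_zero hbound_ne).symm
    _ ≤ cesaroSum M p x ρ := ENNReal.tsum_le_tsum fun i =>
        ENNReal.rpow_le_rpow (ENNReal.ofReal_le_ofReal (le_cesTerm_of_le_abs hM hρ hc i)) hp

theorem notMem_CpMDelta_of_le_abs_delta (hM : Monotone M) (hMpos : ∀ t > 0, 0 < M t)
    (hp : 0 ≤ p) {c : ℝ} (hc₀ : 0 < c) (hc : ∀ k, c ≤ |delta m n x k|) :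
    x ∉ CpMDelta M p m n := by
  rintro ⟨ρ, hρ, hfin⟩
  exact hfin.ne (cesaroSum_eq_top_of_le_abs hM hMpos hp hc₀ hρ hc)

end CpMDelta

theorem delta_two_xseq (m k : ℕ) : delta m 2 xseq k = 0 := by
  have hxseq : xseq = fun j : ℕ => 1 * (j : ℝ) + 1 := funext fun j => by simp [xseq]
  rw [hxseq]
  exact delta_two_affine m 1 1 k

theorem yseq_apply (k : ℕ) : yseq k = if Even k then (k + 1 : ℝ) else 0 := by
  simp [yseq, Set.indicator, Nat.odd_add_one, xseq]

theorem abs_delta_two_yseq {m : ℕ} (hm : Odd m) (k : ℕ) :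
    |delta m 2 yseq k| = 2 * k + 2 * m + 2 := by
  have hk2m : Even (k + 2 * m) ↔ Even k := by simp [parity_simps]
  have hkm : Even (k + m) ↔ ¬ Even k := by simp [Nat.even_add, Nat.not_even_iff_odd.2 hm]
  rw [delta_two_apply, yseq_apply, yseq_apply, yseq_apply]
  by_cases hk : Even k
  · rw [if_pos hk, if_neg (by tauto), if_pos (hk2m.2 hk)]
    push_cast
    rw [abs_of_nonneg (by linarith [k.cast_nonneg (α := ℝ), m.cast_nonneg (α := ℝ)])]
    ring
  · rw [if_neg hk, if_pos (hkm.2 hk), if_neg (by tauto)]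
    push_cast
    rw [abs_of_nonpos (by linarith [k.cast_nonneg (α := ℝ), m.cast_nonneg (α := ℝ)])]
    ring

theorem CpDelta32_not_solid_not_monotone (p : ℝ) (hp : 1 ≤ p) :
    xseq ∈ CpMDelta (fun t => t) p 3 2 ∧
    (∀ k, |yseq k| ≤ |xseq k|) ∧
    yseq = ({k : ℕ | Odd (k + 1)} : Set ℕ).indicator xseq ∧
    yseq ∉ CpMDelta (fun t => t) p 3 2 ∧
    ¬ SolidSet (CpMDelta (fun t => t) p 3 2) ∧
    ¬ MonotoneSet (CpMDelta (fun t => t) p 3 2) := by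
  have hx : xseq ∈ CpMDelta (fun t => t) p 3 2 :=
    mem_CpMDelta_of_delta_eq_zero rfl (by linarith) (funext (delta_two_xseq 3))
  have hy : yseq ∉ CpMDelta (fun t => t) p 3 2 :=
    notMem_CpMDelta_of_le_abs_delta monotone_id (fun _ ht => ht) (by linarith) (c := 8)
      (by norm_num) fun k => by
        rw [abs_delta_two_yseq (by decide)]
        push_cast
        linarith [k.cast_nonneg (α := ℝ)]
  have hnotMono : ¬ MonotoneSet (CpMDelta (fun t => t) p 3 2) :=
    fun h => hy (h xseq hx {k : ℕ | Odd (k + 1)})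
  exact ⟨hx, abs_indicator_le_abs _ xseq, rfl, hy, mt SolidSet.monotoneSet hnotMono, hnotMono⟩
end
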